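/- Uniform splitting preserves feasibility and objective value: let z ∈ ℝ^{V̄'} be feasible for the reduced LP (D2), i.e. z_{v̄} ≥ 0 for all v̄ ∈ V̄', Σ_{v̄} z_{v̄} = 1, Σ_{v̄} z_{v̄}(a_i'·v̄) ≤ b_i for all i ∈ I, and Σ_{v̄} z_{v̄}(c_j'·v̄) = d_j for all j ∈ J. Define y_v = z_{v̄}/n(v̄) for each v ∈ v̄, where n(v̄) is the number of vertices in the class v̄. Then y is feasible for the primal LP (D1): y_v ≥ 0, Σ_{v∈V'} y_v = 1, a_i'·Σ_{v∈V'} y_v v ≤ b_i for all i ∈ I, c_j'·Σ_{v∈V'} y_v v = d_j for all j ∈ J, and e_{k,l}·Σ_{v∈V'} y_v v = 0 for all k ∈ {1,…,n} and l ∈ {1,…,δ_k−1}; moreover Σ_{v∈V'} y_v q(v) = Σ_{v̄∈V̄'} z_{v̄} q(v̄). -/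

import Mathlib

open Finset

/-- The normalized elementary symmetric polynomial
`B_{l,δ}(z) = binom(δ,l)⁻¹ ∑_{1≤σ₁<⋯<σ_l≤δ} z_{σ₁}⋯z_{σ_l}`. -/
noncomputable def normEsymm (δ l : ℕ) (z : Fin δ → ℝ) : ℝ :=
  ((δ.choose l : ℝ))⁻¹ * ∑ s ∈ Finset.powersetCard l (Finset.univ : Finset (Fin δ)),
    ∏ i ∈ s, z i

/-- The polynomial `p(x) = ∑_{l ∈ Δ} c_l x₁^{l₁}⋯x_n^{l_n}` with coefficients `c`,
where `Δ = {0,…,δ₁} × ⋯ × {0,…,δ_n}`. -/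
noncomputable def polyOf {n : ℕ} {δ : Fin n → ℕ} (c : (∀ k, Fin (δ k + 1)) → ℝ)
    (x : Fin n → ℝ) : ℝ :=
  ∑ l : ∀ k, Fin (δ k + 1), c l * ∏ k, x k ^ (l k : ℕ)

/-- The blossom `q(z) = ∑_{l ∈ Δ} c_l ∏_k B_{l_k,δ_k}(z_{k,1},…,z_{k,δ_k})` of the
polynomial with coefficients `c`. -/
noncomputable def blossomOf {n : ℕ} {δ : Fin n → ℕ} (c : (∀ k, Fin (δ k + 1)) → ℝ)
    (z : ∀ k, Fin (δ k) → ℝ) : ℝ :=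
  ∑ l : ∀ k, Fin (δ k + 1), c l * ∏ k, normEsymm (δ k) (l k) (z k)

/-- A function of the blocked variables `z = (z_{k,i})` is multi-affine if it is affine
(degree at most 1) in each single argument `z_{k,i}`. -/
def MultiAffineB {n : ℕ} (δ : Fin n → ℕ) (q : (∀ k, Fin (δ k) → ℝ) → ℝ) : Prop :=
  ∀ (k : Fin n) (i : Fin (δ k)) (z : ∀ k, Fin (δ k) → ℝ) (s t θ : ℝ),
    q (Function.update z k (Function.update (z k) i (θ * s + (1 - θ) * t)))
      = θ * q (Function.update z k (Function.update (z k) i s))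
        + (1 - θ) * q (Function.update z k (Function.update (z k) i t))

/-- `z ≅ z'` : each block of `z` is a permutation of the corresponding block of `z'`. -/
def BlockRel {n : ℕ} (δ : Fin n → ℕ) (z z' : ∀ k, Fin (δ k) → ℝ) : Prop :=
  ∀ k, ∃ π : Equiv.Perm (Fin (δ k)), ∀ i, z k i = z' k (π i)


/-- Euclidean dot product on `ℝ^n`. -/
def dotp {n : ℕ} (u x : Fin n → ℝ) : ℝ := ∑ k, u k * x k

/-- The lifted linear form: for `w ∈ ℝ^n`, `w' · z = ∑_k ∑_i (w k / δ k) * z k i`. -/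
noncomputable def aLift {n : ℕ} (δ : Fin n → ℕ) (w : Fin n → ℝ)
    (z : ∀ k, Fin (δ k) → ℝ) : ℝ :=
  ∑ k, ∑ i : Fin (δ k), (w k / (δ k : ℝ)) * z k i

/-- The canonical representative of the equivalence class of vertices of `R'` whose
`k`-th block has exactly `ℓ k` coordinates equal to `hi k`. -/
noncomputable def vrep {n : ℕ} (δ : Fin n → ℕ) (lo hi : Fin n → ℝ)
    (ℓ : ∀ k, Fin (δ k + 1)) (k : Fin n) (i : Fin (δ k)) : ℝ :=
  if (i : ℕ) < (ℓ k : ℕ) then hi k else lo k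

/-- The vertex of `V' = ∏_k {lo k, hi k}^{δ k}` encoded by the choice function `s`. -/
noncomputable def vert {n : ℕ} (δ : Fin n → ℕ) (lo hi : Fin n → ℝ)
    (s : ∀ k, Fin (δ k) → Bool) (k : Fin n) (i : Fin (δ k)) : ℝ :=
  if s k i then hi k else lo k

/-- The count vector of a vertex: `countOf δ s k` is the number of coordinates of the
`k`-th block equal to the upper bound, i.e. `l_k(v)`; it determines the equivalence
class of the vertex under the per-block permutation relation. -/
def countOf {n : ℕ} (δ : Fin n → ℕ) (s : ∀ k, Fin (δ k) → Bool) (k : Fin n) :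
    Fin (δ k + 1) :=
  ⟨(Finset.univ.filter fun i => s k i = true).card,
    Nat.lt_succ_of_le (le_trans (Finset.card_filter_le _ _) (by simp))⟩

/-! The weight `y` is constant on each class `v̄` and spreads `z_{v̄}` evenly over its
`n(v̄) = ∏ₖ binom(δₖ, ℓₖ)` vertices, each of which is a block permutation of the
representative `vrep`. Hence for every block-symmetric `H` (the constant `1`, the lifted
linear forms, the blossom `q`) the sum `∑ᵥ yᵥ H(v)` regroups class by class into
`∑_{v̄} z_{v̄} H(v̄)`. For the constraints `e_{k,l}`: swapping two coordinates of a block is a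
bijection of `V'` that preserves `y`, so the `y`-weighted mean vertex is constant on blocks. -/

section BoolFun

variable {α : Type*} [Fintype α]

lemma Equiv.Perm.exists_forall_iff_of_card_eq {p q : α → Prop} [DecidablePred p]
    [DecidablePred q] (h : Fintype.card {x // p x} = Fintype.card {x // q x}) :
    ∃ π : Equiv.Perm α, ∀ x, p x ↔ q (π x) := by
  let e := Fintype.equivOfCardEq h
  exact ⟨e.extendSubtype, fun x =>
    ⟨e.extendSubtype_mem x, fun hq => by_contra fun hx => e.extendSubtype_not_mem x hx hq⟩⟩

lemma card_filter_comp_perm (f : α → Bool) (π : Equiv.Perm α) :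
    #(univ.filter fun i => f (π i) = true) = #(univ.filter fun i => f i = true) := by
  rw [← Fintype.card_subtype, ← Fintype.card_subtype]
  exact Fintype.card_congr (π.subtypeEquiv fun _ => Iff.rfl)

variable [DecidableEq α]

def boolFunEquivFinset : (α → Bool) ≃ Finset α where
  toFun t := univ.filter fun i => t i = true
  invFun A i := decide (i ∈ A)
  left_inv t := by ext i; simp
  right_inv A := by ext i; simp

lemma card_boolFun_card_filter_eq (m : ℕ) :
    Fintype.card {t : α → Bool // #(univ.filter fun i => t i = true) = m}
      = (Fintype.card α).choose m := by
  rw [← Fintype.card_finset_len]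
  exact Fintype.card_congr (boolFunEquivFinset.subtypeEquiv fun _ => Iff.rfl)

end BoolFun

section UniformSplitting

variable {n : ℕ} (δ : Fin n → ℕ)

lemma card_filter_countOf_eq (ℓ : ∀ k, Fin (δ k + 1)) :
    #(univ.filter fun s : ∀ k, Fin (δ k) → Bool => countOf δ s = ℓ)
      = ∏ k, (δ k).choose (ℓ k) := by
  rw [← Fintype.card_subtype]
  have e : {s : ∀ k, Fin (δ k) → Bool // countOf δ s = ℓ}
      ≃ ∀ k, {t : Fin (δ k) → Bool // #(univ.filter fun i => t i = true) = ℓ k} :=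
    (Equiv.subtypeEquivRight (q := fun s => ∀ k, #(univ.filter fun i => s k i = true) = ℓ k)
      fun _ => funext_iff.trans (forall_congr' fun _ => Fin.ext_iff)).trans
      (Equiv.subtypePiEquivPi (β := fun k => Fin (δ k) → Bool)
        (p := fun k t => #(univ.filter fun i => t i = true) = ℓ k))
  simp only [Fintype.card_congr e, Fintype.card_pi, card_boolFun_card_filter_eq, Fintype.card_fin]

lemma sum_comp_countOf (G : (∀ k, Fin (δ k + 1)) → ℝ) :
    ∑ s : ∀ k, Fin (δ k) → Bool, G (countOf δ s)
      = ∑ ℓ : ∀ k, Fin (δ k + 1), (∏ k, ((δ k).choose (ℓ k) : ℝ)) * G ℓ := by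
  rw [← sum_fiberwise univ (countOf δ) fun s => G (countOf δ s)]
  refine sum_congr rfl fun ℓ _ => ?_
  rw [sum_congr rfl fun s hs => by rw [(mem_filter.mp hs).2], sum_const,
    card_filter_countOf_eq, nsmul_eq_mul]
  push_cast
  rfl

lemma countOf_update_comp_perm (s : ∀ k, Fin (δ k) → Bool) (k : Fin n)
    (π : Equiv.Perm (Fin (δ k))) :
    countOf δ (Function.update s k (s k ∘ π)) = countOf δ s := by
  funext k'
  rcases eq_or_ne k' k with rfl | hk
  · exact Fin.ext (by simpa [countOf] using card_filter_comp_perm (s k') π)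
  · simp [countOf, Function.update_of_ne hk]

lemma blockRel_vert_vrep_countOf (lo hi : Fin n → ℝ) (s : ∀ k, Fin (δ k) → Bool) :
    BlockRel δ (vert δ lo hi s) (vrep δ lo hi (countOf δ s)) := by
  intro k
  have hcard : Fintype.card {i // s k i = true}
      = Fintype.card {i : Fin (δ k) // (i : ℕ) < countOf δ s k} := by
    rw [Fintype.card_subtype, Fintype.card_subtype, Fin.card_filter_val_lt,
      min_eq_right (Nat.lt_succ_iff.mp (countOf δ s k).2)]
    rfl
  obtain ⟨π, hπ⟩ := Equiv.Perm.exists_forall_iff_of_card_eq hcard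
  refine ⟨π, fun i => ?_⟩
  by_cases hi : s k i = true
  · simp [vert, vrep, hi, (hπ i).mp hi]
  · simp [vert, vrep, hi, mt (hπ i).mpr hi]

lemma aLift_eq_of_blockRel (w : Fin n → ℝ) {u u' : ∀ k, Fin (δ k) → ℝ}
    (h : BlockRel δ u u') : aLift δ w u = aLift δ w u' := by
  refine sum_congr rfl fun k _ => ?_
  obtain ⟨π, hπ⟩ := h k
  simp only [hπ]
  exact Equiv.sum_comp π fun i => w k / δ k * u' k i

lemma aLift_sum_mul {ι : Type*} [Fintype ι] (w : Fin n → ℝ) (c : ι → ℝ)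
    (u : ι → ∀ k, Fin (δ k) → ℝ) :
    aLift δ w (fun k j => ∑ s, c s * u s k j) = ∑ s, c s * aLift δ w (u s) := by
  simp only [aLift, mul_sum]
  rw [sum_comm]
  refine sum_congr rfl fun k _ => ?_
  rw [sum_comm]
  exact sum_congr rfl fun s _ => sum_congr rfl fun j _ => by ring

variable {δ} {lo hi : Fin n → ℝ} {z : (∀ k, Fin (δ k + 1)) → ℝ}
  {y : (∀ k, Fin (δ k) → Bool) → ℝ}

lemma sum_mul_vert_eq_sum_mul_vrep
    (hy : ∀ s, y s = z (countOf δ s) / ∏ k, ((δ k).choose (countOf δ s k) : ℝ))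
    (H : (∀ k, Fin (δ k) → ℝ) → ℝ) (hH : ∀ u u', BlockRel δ u u' → H u = H u') :
    ∑ s, y s * H (vert δ lo hi s) = ∑ ℓ, z ℓ * H (vrep δ lo hi ℓ) := by
  simp only [hy, hH _ _ (blockRel_vert_vrep_countOf δ lo hi _)]
  rw [sum_comp_countOf δ fun ℓ => z ℓ / (∏ k, ((δ k).choose (ℓ k) : ℝ)) * H (vrep δ lo hi ℓ)]
  refine sum_congr rfl fun ℓ _ => ?_
  have hpos : (0 : ℝ) < ∏ k, ((δ k).choose (ℓ k) : ℝ) :=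
    prod_pos fun k _ => Nat.cast_pos.mpr (Nat.choose_pos (Nat.lt_succ_iff.mp (ℓ k).2))
  field_simp

lemma sum_mul_vert_apply_eq
    (hy : ∀ s, y s = z (countOf δ s) / ∏ k, ((δ k).choose (countOf δ s k) : ℝ))
    (k : Fin n) (j j' : Fin (δ k)) :
    ∑ s, y s * vert δ lo hi s k j = ∑ s, y s * vert δ lo hi s k j' := by
  let σ : (∀ k, Fin (δ k) → Bool) → (∀ k, Fin (δ k) → Bool) :=
    fun s => Function.update s k (s k ∘ Equiv.swap j j')
  have hσ : Function.Involutive σ := fun s => by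
    simp only [σ, Function.update_self, Function.update_idem, Function.comp_assoc,
      ← Equiv.coe_trans, Equiv.swap_swap, Equiv.coe_refl, Function.comp_id,
      Function.update_eq_self]
  rw [← Equiv.sum_comp (hσ.toPerm σ)]
  refine sum_congr rfl fun s _ => ?_
  simp [σ, hy, countOf_update_comp_perm, vert]

end UniformSplitting

/-- Uniform splitting preserves feasibility and objective value: if `z` is feasible
for the reduced LP (D2) (indexed by the equivalence classes `v̄ ∈ V̄'`, encoded by
count vectors `ℓ`), then `y`, defined by `y_v = z_{v̄}/n(v̄)` for `v ∈ v̄` where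
`n(v̄) = ∏_k binom(δ_k, ℓ_k)` is the number of vertices in the class `v̄`, is feasible
for the primal LP (D1) — including the difference-form constraints `e_{k,l}` — and the
objective values agree: `∑_v y_v q(v) = ∑_{v̄} z_{v̄} q(v̄)`. -/
theorem stmt_14 {n mI mJ : ℕ} (δ : Fin n → ℕ)
    (lo hi : Fin n → ℝ)
    (q : (∀ k, Fin (δ k) → ℝ) → ℝ)
    (hqsym : ∀ z z' : ∀ k, Fin (δ k) → ℝ, BlockRel δ z z' → q z = q z')
    (a : Fin mI → Fin n → ℝ) (b : Fin mI → ℝ)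
    (c : Fin mJ → Fin n → ℝ) (d : Fin mJ → ℝ)
    (z : (∀ k, Fin (δ k + 1)) → ℝ)
    (hz0 : ∀ ℓ : ∀ k, Fin (δ k + 1), 0 ≤ z ℓ)
    (hz1 : ∑ ℓ : ∀ k, Fin (δ k + 1), z ℓ = 1)
    (hzA : ∀ i, ∑ ℓ : ∀ k, Fin (δ k + 1), z ℓ * aLift δ (a i) (vrep δ lo hi ℓ) ≤ b i)
    (hzC : ∀ j, ∑ ℓ : ∀ k, Fin (δ k + 1), z ℓ * aLift δ (c j) (vrep δ lo hi ℓ) = d j)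
    (y : (∀ k, Fin (δ k) → Bool) → ℝ)
    (hy : ∀ s : ∀ k, Fin (δ k) → Bool,
      y s = z (countOf δ s) / ∏ k, ((δ k).choose (countOf δ s k) : ℝ)) :
    (∀ s, 0 ≤ y s) ∧
    (∑ s : ∀ k, Fin (δ k) → Bool, y s = 1) ∧
    (∀ i, aLift δ (a i)
      (fun k j => ∑ s : ∀ k, Fin (δ k) → Bool, y s * vert δ lo hi s k j) ≤ b i) ∧
    (∀ j', aLift δ (c j')
      (fun k j => ∑ s : ∀ k, Fin (δ k) → Bool, y s * vert δ lo hi s k j) = d j') ∧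
    (∀ (k : Fin n) (l : ℕ) (h : l + 1 < δ k),
      (∑ s : ∀ k, Fin (δ k) → Bool, y s * vert δ lo hi s k ⟨l, by omega⟩)
        - (∑ s : ∀ k, Fin (δ k) → Bool, y s * vert δ lo hi s k ⟨l + 1, h⟩) = 0) ∧
    (∑ s : ∀ k, Fin (δ k) → Bool, y s * q (vert δ lo hi s)
      = ∑ ℓ : ∀ k, Fin (δ k + 1), z ℓ * q (vrep δ lo hi ℓ)) := by
  have hsplit := sum_mul_vert_eq_sum_mul_vrep (lo := lo) (hi := hi) hy
  refine ⟨fun s => ?_, ?_, fun i => ?_, fun j => ?_, fun k l h => ?_, hsplit q hqsym⟩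
  · rw [hy]
    exact div_nonneg (hz0 _) (prod_nonneg fun k _ => Nat.cast_nonneg _)
  · simpa [hz1] using hsplit (fun _ => 1) fun _ _ _ => rfl
  · rw [aLift_sum_mul, hsplit _ fun _ _ => aLift_eq_of_blockRel δ (a i)]
    exact hzA i
  · rw [aLift_sum_mul, hsplit _ fun _ _ => aLift_eq_of_blockRel δ (c j)]
    exact hzC j
  · rw [sub_eq_zero]
    exact sum_mul_vert_apply_eq hy k _ _
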